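/- The restriction of the F-linear map ψ ↦ ψ_{s,t} to the subspace F[λ,λ⁻¹]_{s,t} is an invertible (bijective) linear map from F[λ,λ⁻¹]_{s,t} to itself. -/

import Mathlib

open LaurentPolynomial

noncomputable section

/-- The Laurent polynomial `ψ(c·λ)`. -/
noncomputable def lscale {F : Type*} [Field F] (c : F) (ψ : LaurentPolynomial F) :
    LaurentPolynomial F :=
  Finsupp.sum ψ.coeff fun i a => (a * c ^ i) • (T i : LaurentPolynomial F)

/-- The map `ψ ↦ ψ_{s,t}` of Definition 2.4:
`ψ_{s,t}(λ) = ψ(q⁻¹λ) − (q^{−2s}+q^{−2t})ψ(qλ) + q^{−2s−2t}ψ(q³λ)`. -/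
noncomputable def adu {F : Type*} [Field F] (q : F) (s t : ℤ) (ψ : LaurentPolynomial F) :
    LaurentPolynomial F :=
  lscale q⁻¹ ψ - (q ^ (-2*s) + q ^ (-2*t)) • lscale q ψ + q ^ (-2*s-2*t) • lscale (q^3) ψ

/-- `F[λ,λ⁻¹]_{s,t}`: the span of the monomials `λ^i`, `i ∉ {s,t}`. -/
noncomputable def lstSpan (F : Type*) [Field F] (s t : ℤ) :
    Submodule F (LaurentPolynomial F) :=
  Submodule.span F {ψ : LaurentPolynomial F | ∃ i : ℤ, i ≠ s ∧ i ≠ t ∧ ψ = T i}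

/-- `x^i` for `i : ℤ`, interpreting negative powers via a designated inverse `y`. -/
def zpow2 {B : Type*} [Monoid B] (x y : B) (i : ℤ) : B :=
  if 0 ≤ i then x ^ i.toNat else y ^ (-i).toNat

/-- Evaluation `ψ(c·x)` of a Laurent polynomial `ψ`, where `y` plays the role of `x⁻¹`. -/
noncomputable def leval {F : Type*} [Field F] {B : Type*} [Ring B] [Algebra F B]
    (ψ : LaurentPolynomial F) (c : F) (x y : B) : B :=
  Finsupp.sum ψ.coeff fun i a => (a * c ^ i) • zpow2 x y i

/-
In the monomial basis the map is diagonal: it multiplies the coefficient of `λ^j` by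
`q^{-j} - (q^{-2s} + q^{-2t}) q^j + q^{-2s-2t} q^{3j} = q^{-j-2s-2t} (q^{2s} - q^{2j}) (q^{2t} - q^{2j})`,
which vanishes only for `j ∈ {s, t}` because `q` is not a root of unity. `F[λ,λ⁻¹]_{s,t}` is
the space of Laurent polynomials supported off `{s, t}`, and a diagonal map with nonzero
entries on a support set is a bijection of the polynomials supported there.
-/

namespace AddMonoidAlgebra

variable {K M : Type*} [DivisionRing K]

theorem bijOn_supported_of_coeff_eq_mul {f : AddMonoidAlgebra K M → AddMonoidAlgebra K M}
    (c : M → K) (hf : ∀ x m, (f x).coeff m = x.coeff m * c m) {S : Set M}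
    (hc : ∀ m ∈ S, c m ≠ 0) :
    Set.BijOn f (supported K K S) (supported K K S) := by
  simp only [SetLike.mem_coe, Set.BijOn, Set.MapsTo, Set.InjOn, Set.SurjOn, Set.subset_def,
    Set.mem_image, mem_supported']
  refine ⟨fun x hx m hm => by rw [hf, hx m hm, zero_mul], fun x hx y hy hxy => ?_,
    fun y hy => ?_⟩
  · ext m
    by_cases hm : m ∈ S
    · exact mul_right_cancel₀ (hc m hm) (by rw [← hf, ← hf, hxy])
    · rw [hx m hm, hy m hm]
  · let x : AddMonoidAlgebra K M := ofCoeff <| Finsupp.onFinset y.coeff.support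
      (fun m => y.coeff m * (c m)⁻¹) fun _ hm => Finsupp.mem_support_iff.2 (left_ne_zero_of_mul hm)
    refine ⟨x, fun m hm => by simp [x, hy m hm], ?_⟩
    ext m
    by_cases hm : m ∈ S
    · simp [x, hf, hc m hm]
    · simp [x, hf, hy m hm]

end AddMonoidAlgebra

theorem zpow_ne_one_of_pow_ne_one {G : Type*} [GroupWithZero G] {q : G}
    (hq : ∀ n : ℕ, 0 < n → q ^ n ≠ 1) {m : ℤ} (hm : m ≠ 0) : q ^ m ≠ 1 := by
  intro h
  refine hq m.natAbs (Int.natAbs_pos.2 hm) ?_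
  rcases Int.natAbs_eq m with hm' | hm' <;> rw [hm'] at h
  · exact_mod_cast h
  · rwa [zpow_neg, inv_eq_one, zpow_natCast] at h

section

variable {F : Type*} [Field F]

theorem coeff_lscale (c : F) (ψ : LaurentPolynomial F) (j : ℤ) :
    (lscale c ψ).coeff j = ψ.coeff j * c ^ j := by
  simp only [lscale, T, AddMonoidAlgebra.smul_single', mul_one, AddMonoidAlgebra.coeff_finsuppSum,
    AddMonoidAlgebra.coeff_single, Finsupp.sum_apply, Finsupp.single_apply]
  rw [Finsupp.sum_ite_eq']
  split_ifs with h
  · rfl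
  · rw [Finsupp.notMem_support_iff.mp h, zero_mul]

def aduEigenvalue (q : F) (s t j : ℤ) : F :=
  q⁻¹ ^ j - (q ^ (-2*s) + q ^ (-2*t)) * q ^ j + q ^ (-2*s-2*t) * (q ^ 3) ^ j

theorem coeff_adu (q : F) (s t : ℤ) (ψ : LaurentPolynomial F) (j : ℤ) :
    (adu q s t ψ).coeff j = ψ.coeff j * aduEigenvalue q s t j := by
  simp only [adu, aduEigenvalue, AddMonoidAlgebra.coeff_add, AddMonoidAlgebra.coeff_sub,
    AddMonoidAlgebra.coeff_smul, Finsupp.add_apply, Finsupp.sub_apply, Finsupp.smul_apply,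
    smul_eq_mul, coeff_lscale]
  ring

theorem aduEigenvalue_eq {q : F} (hq0 : q ≠ 0) (s t j : ℤ) :
    aduEigenvalue q s t j = (q ^ j * q ^ (2*s) * q ^ (2*t))⁻¹ *
      ((q ^ (2*s) - q ^ (2*j)) * (q ^ (2*t) - q ^ (2*j))) := by
  have h3 : (q ^ 3) ^ j = (q ^ j) ^ 3 := by
    rw [← zpow_natCast, ← zpow_mul, mul_comm, zpow_mul, zpow_natCast]
  have h2 (k : ℤ) : q ^ (2 * k) = (q ^ k) ^ 2 := by rw [mul_comm, zpow_mul, zpow_ofNat]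
  rw [aduEigenvalue, sub_eq_add_neg (-2*s), zpow_add₀ hq0, neg_mul, neg_mul, zpow_neg, zpow_neg,
    inv_zpow, h3]
  simp only [h2]
  have hj := zpow_ne_zero j hq0
  have hs := zpow_ne_zero s hq0
  have ht := zpow_ne_zero t hq0
  field_simp
  ring

theorem aduEigenvalue_ne_zero {q : F} (hq0 : q ≠ 0)
    (hq : ∀ n : ℕ, 0 < n → q ^ n ≠ 1) {s t j : ℤ} (hjs : j ≠ s) (hjt : j ≠ t) :
    aduEigenvalue q s t j ≠ 0 := by
  have hne : ∀ {m}, j ≠ m → q ^ (2*m) - q ^ (2*j) ≠ 0 := fun hjm => by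
    rw [sub_ne_zero, Ne, ← div_eq_one_iff_eq (zpow_ne_zero _ hq0), ← zpow_sub₀ hq0]
    exact zpow_ne_one_of_pow_ne_one hq (by omega)
  rw [aduEigenvalue_eq hq0]
  exact mul_ne_zero (inv_ne_zero <| by apply_rules [mul_ne_zero, zpow_ne_zero])
    (mul_ne_zero (hne hjs) (hne hjt))

end

theorem lstSpan_eq_supported (F : Type*) [Field F] (s t : ℤ) :
    lstSpan F s t = AddMonoidAlgebra.supported F F {i | i ≠ s ∧ i ≠ t} := by
  rw [AddMonoidAlgebra.supported_eq_span_single, lstSpan]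
  congr 1
  ext ψ
  constructor
  · rintro ⟨i, his, hit, rfl⟩
    exact ⟨i, ⟨his, hit⟩, rfl⟩
  · rintro ⟨i, ⟨his, hit⟩, rfl⟩
    exact ⟨i, his, hit, rfl⟩

theorem stmt6_general {F : Type*} [Field F] (q : F) (hq0 : q ≠ 0)
    (hq : ∀ n : ℕ, 0 < n → q ^ n ≠ 1) (s t : ℤ) :
    Set.BijOn (adu q s t) (lstSpan F s t : Set (LaurentPolynomial F))
      (lstSpan F s t : Set (LaurentPolynomial F)) := by
  rw [lstSpan_eq_supported]
  exact AddMonoidAlgebra.bijOn_supported_of_coeff_eq_mul _ (coeff_adu q s t)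
    fun j hj => aduEigenvalue_ne_zero hq0 hq hj.1 hj.2

theorem stmt6 {F : Type*} [Field F] (q : F) (hq0 : q ≠ 0)
    (hq : ∀ n : ℕ, 0 < n → q ^ n ≠ 1) (s t : ℤ) (hst : s ≠ t) :
    Set.BijOn (adu q s t) (lstSpan F s t : Set (LaurentPolynomial F))
      (lstSpan F s t : Set (LaurentPolynomial F)) :=
  stmt6_general q hq0 hq s t

end
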